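/- arXiv:2310.20438 — 2 statements merged into one kernel-verified Lean document; each statement's English description precedes it below -/
import Mathlib

section
/- Let x ~ N(0, I_p) and M a fixed p×p matrix. Then E[‖x‖₂⁴ · (x^T M x)^2] = (p+4)(p+6)·[(tr M)^2 + tr(M M) + tr(M^T M)]. -/
/-!
For a monomial `x^s = ∏_{i ∈ s} x_i` (`s` a multiset of coordinates), Stein's identity
`E[x^{n+2}] = (n+1) E[x^n]` for a standard normal coordinate gives
`E[x_a² x^s] = (count_a s + 1) E[x^s]`, and summing over `a` yields
`E[‖x‖² x^s] = (deg s + p) E[x^s]`. Hence `‖x‖⁴` multiplies the expectation of any quartic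
monomial, and so of `(xᵀMx)²`, by `(p+4)(p+6)`. The same identity, read as Gaussian integration
by parts, gives Wick's formula `E[x_j x_k x_l x_m] = δ_jk δ_lm + δ_jm δ_kl + δ_jl δ_km`, whose
contraction with `M_jk M_lm` is `(tr M)² + tr(MM) + tr(MᵀM)`.
-/

open MeasureTheory ProbabilityTheory Matrix

open scoped NNReal

noncomputable section

section Moments

lemma integrable_pow_gaussianReal (μ : ℝ) (v : ℝ≥0) (n : ℕ) :
    Integrable (fun x : ℝ => x ^ n) (gaussianReal μ v) :=
  (memLp_id_gaussianReal (μ := μ) (v := v) n).integrable_norm_pow'.mono (by fun_prop)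
    (ae_of_all _ fun x => by simp)

lemma integrable_gaussianPDFReal_mul_pow (μ : ℝ) {v : ℝ≥0} (hv : v ≠ 0) (n : ℕ) :
    Integrable fun x : ℝ => gaussianPDFReal μ v x * x ^ n := by
  have h := integrable_pow_gaussianReal μ v n
  rw [gaussianReal_of_var_ne_zero _ hv, integrable_withDensity_iff_integrable_smul'
    (measurable_gaussianPDF _ _) (ae_of_all _ fun _ => gaussianPDF_lt_top)] at h
  simpa [toReal_gaussianPDF] using h

lemma hasDerivAt_gaussianPDFReal_zero_one (x : ℝ) :
    HasDerivAt (gaussianPDFReal 0 1) (-x * gaussianPDFReal 0 1 x) x := by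
  have hφ : gaussianPDFReal 0 1 = fun x => (√(2 * Real.pi))⁻¹ * Real.exp (-x ^ 2 / 2) := by
    ext x
    simp [gaussianPDFReal]
  have h : HasDerivAt (fun x : ℝ => -x ^ 2 / 2) (-x) x := by
    simpa using ((hasDerivAt_pow 2 x).fun_neg.div_const 2).congr_deriv (by ring)
  rw [hφ]
  exact (h.exp.const_mul _).congr_deriv (by ring)

def gaussianMoment (n : ℕ) : ℝ := ∫ x, x ^ n ∂gaussianReal 0 1

lemma gaussianMoment_eq_integral_gaussianPDFReal_mul (n : ℕ) :
    gaussianMoment n = ∫ x, gaussianPDFReal 0 1 x * x ^ n := by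
  simp [gaussianMoment, integral_gaussianReal_eq_integral_smul]

lemma gaussianMoment_one : gaussianMoment 1 = 0 := by
  simp [gaussianMoment, integral_id_gaussianReal]

lemma gaussianMoment_add_two (n : ℕ) : gaussianMoment (n + 2) = (n + 1) * gaussianMoment n := by
  have hderiv (x : ℝ) : HasDerivAt (fun x => gaussianPDFReal 0 1 x * x ^ (n + 1))
      ((n + 1) * (gaussianPDFReal 0 1 x * x ^ n) - gaussianPDFReal 0 1 x * x ^ (n + 2)) x :=
    ((hasDerivAt_gaussianPDFReal_zero_one x).fun_mul (hasDerivAt_pow (n + 1) x)).congr_deriv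
      (by push_cast; ring)
  have hφ := integrable_gaussianPDFReal_mul_pow 0 one_ne_zero
  have h := integral_eq_zero_of_hasDerivAt_of_integrable hderiv
    (((hφ n).const_mul _).sub (hφ (n + 2))) (hφ (n + 1))
  rw [integral_sub ((hφ n).const_mul _) (hφ (n + 2)), integral_const_mul] at h
  rw [gaussianMoment_eq_integral_gaussianPDFReal_mul, gaussianMoment_eq_integral_gaussianPDFReal_mul]
  linarith

end Moments

section Monomial

variable {ι : Type*}

abbrev gaussianPi (ι : Type*) [Fintype ι] : Measure (ι → ℝ) :=
  Measure.pi fun _ : ι => gaussianReal 0 1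

def coordMonomial (s : Multiset ι) (x : ι → ℝ) : ℝ := (s.map x).prod

@[simp]
lemma coordMonomial_zero (x : ι → ℝ) : coordMonomial 0 x = 1 := by simp [coordMonomial]

lemma coordMonomial_cons (a : ι) (s : Multiset ι) (x : ι → ℝ) :
    coordMonomial (a ::ₘ s) x = x a * coordMonomial s x := by simp [coordMonomial]

variable [Fintype ι]

lemma sum_sq_mul_coordMonomial (s : Multiset ι) (x : ι → ℝ) :
    (∑ i, x i ^ 2) * coordMonomial s x = ∑ a, coordMonomial (a ::ₘ a ::ₘ s) x := by
  simp only [Finset.sum_mul, coordMonomial_cons]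
  exact Finset.sum_congr rfl fun a _ => by ring

lemma sum_sq_pow_succ_mul_coordMonomial (n : ℕ) (s : Multiset ι) (x : ι → ℝ) :
    (∑ i, x i ^ 2) ^ (n + 1) * coordMonomial s x
      = ∑ a, (∑ i, x i ^ 2) ^ n * coordMonomial (a ::ₘ a ::ₘ s) x := by
  rw [pow_succ, mul_assoc, sum_sq_mul_coordMonomial, Finset.mul_sum]

variable [DecidableEq ι]

lemma coordMonomial_eq_prod_pow (s : Multiset ι) (x : ι → ℝ) :
    coordMonomial s x = ∏ i, x i ^ s.count i := by
  rw [coordMonomial, Finset.prod_multiset_map_count]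
  exact Finset.prod_subset (Finset.subset_univ _) fun i _ hi => by
    simp [Multiset.count_eq_zero.2 (by simpa using hi)]

lemma integrable_coordMonomial (s : Multiset ι) :
    Integrable (coordMonomial s) (gaussianPi ι) := by
  simp_rw [funext (coordMonomial_eq_prod_pow s)]
  exact Integrable.fintype_prod fun i => integrable_pow_gaussianReal 0 1 (s.count i)

lemma integral_coordMonomial (s : Multiset ι) :
    ∫ x, coordMonomial s x ∂gaussianPi ι = ∏ i, gaussianMoment (s.count i) := by
  simp_rw [coordMonomial_eq_prod_pow]
  exact integral_fintype_prod_eq_prod fun i t => t ^ s.count i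

lemma integral_coordMonomial_cons_cons (a : ι) (s : Multiset ι) :
    ∫ x, coordMonomial (a ::ₘ a ::ₘ s) x ∂gaussianPi ι
      = (s.count a + 1) * ∫ x, coordMonomial s x ∂gaussianPi ι := by
  simp only [integral_coordMonomial, ← Finset.mul_prod_erase _ _ (Finset.mem_univ a),
    Multiset.count_cons_self, add_assoc, one_add_one_eq_two, gaussianMoment_add_two, mul_assoc]
  congr 2
  refine Finset.prod_congr rfl fun i hi => ?_
  rw [Multiset.count_cons_of_ne (Finset.ne_of_mem_erase hi),
    Multiset.count_cons_of_ne (Finset.ne_of_mem_erase hi)]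

lemma integral_coordMonomial_cons (j : ι) (s : Multiset ι) :
    ∫ x, coordMonomial (j ::ₘ s) x ∂gaussianPi ι
      = s.count j * ∫ x, coordMonomial (s.erase j) x ∂gaussianPi ι := by
  by_cases hj : j ∈ s
  · conv_lhs => rw [← Multiset.cons_erase hj]
    have hcount : s.count j = (s.erase j).count j + 1 := by
      rw [Multiset.count_erase_self, Nat.sub_add_cancel (Multiset.count_pos.2 hj)]
    rw [integral_coordMonomial_cons_cons, hcount]
    push_cast
    ring
  · rw [Multiset.count_eq_zero.2 hj, Nat.cast_zero, zero_mul, integral_coordMonomial]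
    exact Finset.prod_eq_zero (Finset.mem_univ j)
      (by simp [Multiset.count_eq_zero.2 hj, gaussianMoment_one])

lemma integrable_sum_sq_pow_mul_coordMonomial (n : ℕ) (s : Multiset ι) :
    Integrable (fun x => (∑ i, x i ^ 2) ^ n * coordMonomial s x) (gaussianPi ι) := by
  induction n generalizing s with
  | zero => simpa using integrable_coordMonomial s
  | succ n ih =>
    simp_rw [sum_sq_pow_succ_mul_coordMonomial]
    exact integrable_finsetSum _ fun a _ => ih _

lemma sum_integral_coordMonomial_cons_cons (s : Multiset ι) :
    ∑ a, ∫ x, coordMonomial (a ::ₘ a ::ₘ s) x ∂gaussianPi ι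
      = (Multiset.card s + Fintype.card ι) * ∫ x, coordMonomial s x ∂gaussianPi ι := by
  simp only [integral_coordMonomial_cons_cons, ← Finset.sum_mul, Finset.sum_add_distrib,
    ← Nat.cast_sum, Multiset.sum_count_eq_card (fun a _ => Finset.mem_univ a)]
  simp

lemma integral_sum_sq_pow_mul_coordMonomial (n : ℕ) (s : Multiset ι) :
    ∫ x, (∑ i, x i ^ 2) ^ n * coordMonomial s x ∂gaussianPi ι
      = (∏ k ∈ Finset.range n, (Multiset.card s + 2 * k + Fintype.card ι : ℝ))
        * ∫ x, coordMonomial s x ∂gaussianPi ι := by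
  induction n generalizing s with
  | zero => simp
  | succ n ih =>
    simp_rw [sum_sq_pow_succ_mul_coordMonomial]
    rw [integral_finsetSum _ fun a _ => integrable_sum_sq_pow_mul_coordMonomial n _]
    simp only [ih, Multiset.card_cons, ← Finset.mul_sum, sum_integral_coordMonomial_cons_cons,
      Finset.prod_range_succ']
    rw [Nat.cast_zero, mul_zero, add_zero, ← mul_assoc]
    congr 2
    exact Finset.prod_congr rfl fun k _ => by push_cast; ring

lemma integral_coordMonomial_pair (l m : ι) :
    ∫ x, coordMonomial (l ::ₘ m ::ₘ 0) x ∂gaussianPi ι = if l = m then 1 else 0 := by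
  rw [integral_coordMonomial_cons]
  by_cases h : l = m
  · subst h
    simp
  · simp [h]

lemma integral_coordMonomial_quadruple (j k l m : ι) :
    ∫ x, coordMonomial (j ::ₘ k ::ₘ l ::ₘ m ::ₘ 0) x ∂gaussianPi ι
      = (if j = k then 1 else 0) * (if l = m then 1 else 0)
        + (if j = m then 1 else 0) * (if k = l then 1 else 0)
        + (if j = l then 1 else 0) * (if k = m then 1 else 0) := by
  rw [integral_coordMonomial_cons]
  by_cases hjk : j = k
  · subst hjk
    rw [Multiset.erase_cons_head, integral_coordMonomial_pair]
    simp only [Multiset.count_cons, Multiset.count_zero]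
    split_ifs <;> simp_all
    norm_num
  by_cases hjl : j = l
  · subst hjl
    rw [Multiset.erase_cons_tail _ (Ne.symm hjk), Multiset.erase_cons_head,
      integral_coordMonomial_pair]
    simp only [Multiset.count_cons, Multiset.count_zero]
    split_ifs <;> simp_all
  by_cases hjm : j = m
  · subst hjm
    rw [Multiset.erase_cons_tail _ (Ne.symm hjk), Multiset.erase_cons_tail _ (Ne.symm hjl),
      Multiset.erase_cons_head, integral_coordMonomial_pair]
    simp only [Multiset.count_cons, Multiset.count_zero]
    split_ifs <;> simp_all
  simp [hjk, hjl, hjm]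

end Monomial

section QuadraticForm

variable {ι : Type*} [Fintype ι]

lemma dotProduct_mulVec_sq (M : Matrix ι ι ℝ) (x : ι → ℝ) :
    (x ⬝ᵥ M *ᵥ x) ^ 2
      = ∑ j, ∑ k, ∑ l, ∑ m, M j k * M l m * coordMonomial (j ::ₘ k ::ₘ l ::ₘ m ::ₘ 0) x := by
  have hQ : x ⬝ᵥ M *ᵥ x = ∑ j, ∑ k, M j k * (x j * x k) := by
    simp only [dotProduct, mulVec, Finset.mul_sum]
    exact Finset.sum_congr rfl fun j _ => Finset.sum_congr rfl fun k _ => by ring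
  rw [hQ, sq, Finset.sum_mul_sum]
  simp_rw [Finset.sum_mul_sum]
  refine Finset.sum_congr rfl fun j _ => ?_
  rw [Finset.sum_comm]
  refine Finset.sum_congr rfl fun k _ => Finset.sum_congr rfl fun l _ =>
    Finset.sum_congr rfl fun m _ => ?_
  simp only [coordMonomial_cons, coordMonomial_zero]
  ring

variable [DecidableEq ι]

lemma sum_mul_mul_pairings (M : Matrix ι ι ℝ) :
    ∑ j, ∑ k, ∑ l, ∑ m, M j k * M l m *
        ((if j = k then 1 else 0) * (if l = m then 1 else 0)
          + (if j = m then 1 else 0) * (if k = l then 1 else 0)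
          + (if j = l then 1 else 0) * (if k = m then 1 else 0))
      = M.trace ^ 2 + (M * M).trace + (Mᵀ * M).trace := by
  simp only [mul_add, Finset.sum_add_distrib]
  congr 1
  congr 1
  · simp [trace, sq, Finset.sum_mul_sum]
  · simp [trace, mul_apply]
  · simp [trace, mul_apply]
    exact Finset.sum_comm

lemma integral_sum_sq_pow_mul_dotProduct_mulVec_sq (n : ℕ) (M : Matrix ι ι ℝ) :
    ∫ x, (∑ i, x i ^ 2) ^ n * (x ⬝ᵥ M *ᵥ x) ^ 2 ∂gaussianPi ι
      = (∏ k ∈ Finset.range n, (4 + 2 * k + Fintype.card ι : ℝ))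
        * (M.trace ^ 2 + (M * M).trace + (Mᵀ * M).trace) := by
  have hint (s : Multiset ι) (c : ℝ) :
      Integrable (fun x => c * ((∑ i, x i ^ 2) ^ n * coordMonomial s x)) (gaussianPi ι) :=
    (integrable_sum_sq_pow_mul_coordMonomial n s).const_mul c
  simp_rw [dotProduct_mulVec_sq, Finset.mul_sum, mul_left_comm ((∑ i, _ ^ 2) ^ n)]
  simp (disch := intros; repeat (first | exact hint _ _ | (apply integrable_finsetSum; intros)))
    only [integral_finsetSum]
  simp only [integral_const_mul, integral_sum_sq_pow_mul_coordMonomial,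
    integral_coordMonomial_quadruple, Multiset.card_cons, Multiset.card_zero]
  simp only [mul_left_comm (M _ _ * M _ _), ← Finset.mul_sum, sum_mul_mul_pairings]
  norm_num

end QuadraticForm

theorem statement4 (p : ℕ) (M : Matrix (Fin p) (Fin p) ℝ) :
    ∫ x : Fin p → ℝ, (∑ i, x i ^ 2) ^ 2 * (x ⬝ᵥ M.mulVec x) ^ 2
      ∂(Measure.pi fun _ : Fin p => gaussianReal 0 1)
    = ((p : ℝ) + 4) * ((p : ℝ) + 6) *
      (M.trace ^ 2 + (M * M).trace + (Mᵀ * M).trace) := by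
  refine (integral_sum_sq_pow_mul_dotProduct_mulVec_sq 2 M).trans ?_
  congr 1
  simp [Finset.prod_range_succ]
  ring
end
end

section
/- Let x, y ~ N(0, I_p) be independent standard Gaussian vectors and M₁, M₂ fixed p×p matrices. Then E[(x^T y)^2 · (y^T M₁ x)(x^T M₂ y)] = 2·tr(M₁)·tr(M₂) + (p+4)·tr(M₁ M₂) + 2·tr(M₁ M₂^T). -/
open MeasureTheory ProbabilityTheory Matrix
open Real

noncomputable section


lemma pdf01_eq (t : ℝ) :
    gaussianPDFReal 0 1 t = (√(2 * π))⁻¹ * rexp (-(1/2) * t ^ 2) := by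
  unfold gaussianPDFReal
  norm_num
  left; ring

lemma integral_gaussianReal01 (g : ℝ → ℝ) :
    ∫ t, g t ∂(gaussianReal 0 1) = ∫ t, gaussianPDFReal 0 1 t * g t := by
  rw [gaussianReal_of_var_ne_zero 0 one_ne_zero, gaussianPDF_def]
  have h : (fun x => ENNReal.ofReal (gaussianPDFReal 0 1 x))
      = fun x => ((gaussianPDFReal 0 1 x).toNNReal : ENNReal) := rfl
  rw [h, integral_withDensity_eq_integral_smul ((measurable_gaussianPDFReal 0 1).real_toNNReal)]
  congr 1; ext t
  simp [NNReal.smul_def, Real.coe_toNNReal _ (gaussianPDFReal_nonneg 0 1 t)]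

lemma integrable_kernel (k : ℕ) :
    Integrable (fun t : ℝ => t ^ k * rexp (-(1/2) * t ^ 2)) := by
  have := integrable_rpow_mul_exp_neg_mul_sq (b := 1/2) (by norm_num) (s := (k : ℝ))
    (by exact neg_one_lt_zero.trans_le (Nat.cast_nonneg k))
  simpa [Real.rpow_natCast] using this

lemma integrable_pow_gaussianReal01 (k : ℕ) :
    Integrable (fun t : ℝ => t ^ k) (gaussianReal 0 1) := by
  rw [gaussianReal_of_var_ne_zero 0 one_ne_zero, gaussianPDF_def]
  have h : (fun x => ENNReal.ofReal (gaussianPDFReal 0 1 x))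
      = fun x => ((gaussianPDFReal 0 1 x).toNNReal : ENNReal) := rfl
  rw [h, integrable_withDensity_iff_integrable_smul
    ((measurable_gaussianPDFReal 0 1).real_toNNReal)]
  have heq : (fun t : ℝ => (gaussianPDFReal 0 1 t).toNNReal • (t ^ k))
      = fun t : ℝ => (√(2 * π))⁻¹ * (t ^ k * rexp (-(1/2) * t ^ 2)) := by
    ext t
    rw [NNReal.smul_def, Real.coe_toNNReal _ (gaussianPDFReal_nonneg 0 1 t), pdf01_eq]
    simp [smul_eq_mul]; ring
  rw [heq]
  exact (integrable_kernel k).const_mul _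

lemma odd_kernel_zero (k : ℕ) (hk : Odd k) :
    ∫ t : ℝ, t ^ k * rexp (-(1/2) * t ^ 2) = 0 := by
  have h := integral_neg_eq_self (fun t : ℝ => t ^ k * rexp (-(1/2) * t ^ 2)) volume
  have h2 : ∀ t : ℝ, (-t) ^ k * rexp (-(1/2) * (-t) ^ 2)
      = -(t ^ k * rexp (-(1/2) * t ^ 2)) := by
    intro t
    rw [hk.neg_pow, neg_sq]
    ring
  simp only [h2, integral_neg] at h
  linarith

lemma even_kernel (k : ℕ) :
    ∫ t : ℝ, t ^ (2*k) * rexp (-(1/2) * t ^ 2)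
      = 2 * ((1/2 : ℝ) ^ (-(2*(k:ℝ) + 1)/2) * (1/2) * Gamma ((2*(k:ℝ) + 1)/2)) := by
  have h1 : ∫ t : ℝ, t ^ (2*k) * rexp (-(1/2) * t ^ 2)
      = 2 * ∫ t in Set.Ioi (0:ℝ), t ^ (2*k) * rexp (-(1/2) * t ^ 2) := by
    rw [← integral_comp_abs (f := fun t => t ^ (2*k) * rexp (-(1/2) * t ^ 2))]
    congr 1; ext t
    simp [pow_mul, sq_abs]
  rw [h1]; congr 1
  rw [← integral_rpow_mul_exp_neg_mul_rpow (p := 2) (q := 2*(k:ℝ)) (b := 1/2)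
    two_pos (by have := Nat.cast_nonneg (α := ℝ) k; linarith) (by norm_num)]
  refine setIntegral_congr_fun measurableSet_Ioi (fun t ht => ?_)
  have e1 : t ^ (2*(k:ℝ)) = t ^ (2*k) := by
    rw [show (2*(k:ℝ)) = ((2*k : ℕ):ℝ) by push_cast; ring, rpow_natCast]
  have e2 : t ^ (2:ℝ) = t ^ 2 := by
    rw [show ((2:ℝ)) = ((2:ℕ):ℝ) by norm_num, rpow_natCast]
  rw [e1, e2]

lemma gm_reduce (k : ℕ) : ∫ t, t^k ∂(gaussianReal 0 1)
    = (√(2*π))⁻¹ * ∫ t : ℝ, t^k * rexp (-(1/2)*t^2) := by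
  rw [integral_gaussianReal01 (fun t => t ^ k)]
  have h : ∀ t : ℝ, gaussianPDFReal 0 1 t * t ^ k
      = (√(2*π))⁻¹ * (t^k * rexp (-(1/2)*t^2)) := fun t => by rw [pdf01_eq]; ring
  simp_rw [h]
  exact integral_const_mul _ _

lemma half_rpow (c : ℝ) : (1/2 : ℝ) ^ (-c) = (2:ℝ) ^ c := by
  rw [one_div, Real.inv_rpow (by norm_num), Real.rpow_neg (by norm_num), inv_inv]

lemma two_rpow_half : (2:ℝ) ^ ((1:ℝ)/2) = √2 := by
  rw [Real.sqrt_eq_rpow]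

lemma gm0 : ∫ t, t^0 ∂(gaussianReal 0 1) = 1 := by simp
lemma gm1 : ∫ t, t^1 ∂(gaussianReal 0 1) = 0 := by
  rw [gm_reduce, odd_kernel_zero 1 (by norm_num), mul_zero]
lemma gm3 : ∫ t, t^3 ∂(gaussianReal 0 1) = 0 := by
  rw [gm_reduce, odd_kernel_zero 3 (by decide), mul_zero]

lemma gamma32 : Gamma ((3:ℝ)/2) = √π / 2 := by
  rw [show (3:ℝ)/2 = 1/2 + 1 by norm_num, Gamma_add_one (by norm_num), Gamma_one_half_eq]
  ring
lemma gamma52 : Gamma ((5:ℝ)/2) = 3 * √π / 4 := by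
  rw [show (5:ℝ)/2 = 3/2 + 1 by norm_num, Gamma_add_one (by norm_num), gamma32]
  ring

lemma gm2 : ∫ t, t^2 ∂(gaussianReal 0 1) = 1 := by
  rw [gm_reduce, show (2:ℕ) = 2*1 by norm_num, even_kernel 1]
  rw [show (-(2*((1:ℕ):ℝ) + 1)/2) = -(3/2) by norm_num, half_rpow,
    show ((2*((1:ℕ):ℝ) + 1)/2) = 3/2 by norm_num, gamma32]
  rw [show (3:ℝ)/2 = 1 + 1/2 by norm_num, rpow_add (by norm_num), rpow_one, two_rpow_half]
  rw [Real.sqrt_mul (by norm_num) π]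
  have h2 : (0:ℝ) < √2 := Real.sqrt_pos.mpr (by norm_num)
  have hp : (0:ℝ) < √π := Real.sqrt_pos.mpr Real.pi_pos
  field_simp

lemma gm4 : ∫ t, t^4 ∂(gaussianReal 0 1) = 3 := by
  rw [gm_reduce, show (4:ℕ) = 2*2 by norm_num, even_kernel 2]
  rw [show (-(2*((2:ℕ):ℝ) + 1)/2) = -(5/2) by norm_num, half_rpow,
    show ((2*((2:ℕ):ℝ) + 1)/2) = 5/2 by norm_num, gamma52]
  rw [show (5:ℝ)/2 = 2 + 1/2 by norm_num, rpow_add (by norm_num), two_rpow_half,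
    show ((2:ℝ)^(2:ℝ)) = 4 by rw [show (2:ℝ) = ((2:ℕ):ℝ) by norm_num, rpow_natCast]; norm_num]
  rw [Real.sqrt_mul (by norm_num) π]
  have h2 : (0:ℝ) < √2 := Real.sqrt_pos.mpr (by norm_num)
  have hp : (0:ℝ) < √π := Real.sqrt_pos.mpr Real.pi_pos
  field_simp

lemma pi_moment (p : ℕ) (e : Fin p → ℕ) :
    ∫ x : Fin p → ℝ, ∏ i, (x i)^(e i) ∂(Measure.pi fun _ => gaussianReal 0 1)
      = ∏ i, ∫ t, t^(e i) ∂(gaussianReal 0 1) := by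
  letI : MeasureSpace ℝ := ⟨gaussianReal 0 1⟩
  haveI : SigmaFinite (volume : Measure ℝ) := inferInstanceAs (SigmaFinite (gaussianReal 0 1))
  exact MeasureTheory.integral_fin_nat_prod_eq_prod (f := fun i t => t ^ e i)

lemma pi_integrable (p : ℕ) (e : Fin p → ℕ) :
    Integrable (fun x : Fin p → ℝ => ∏ i, (x i)^(e i))
      (Measure.pi fun _ => gaussianReal 0 1) := by
  letI : MeasureSpace ℝ := ⟨gaussianReal 0 1⟩
  haveI : SigmaFinite (volume : Measure ℝ) := inferInstanceAs (SigmaFinite (gaussianReal 0 1))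
  exact Integrable.fin_nat_prod (f := fun i t => t ^ e i)
    (fun i => integrable_pow_gaussianReal01 (e i))

variable {p : ℕ}

def dd (a b : Fin p) : ℝ := if a = b then 1 else 0

def cnt (i j k l m : Fin p) : ℕ :=
  (if i = m then 1 else 0) + (if j = m then 1 else 0)
    + (if k = m then 1 else 0) + (if l = m then 1 else 0)

lemma monomial_eq (i j k l : Fin p) (x : Fin p → ℝ) :
    x i * x j * x k * x l = ∏ m, (x m) ^ (cnt i j k l m) := by
  simp only [cnt, pow_add, Finset.prod_mul_distrib, pow_ite, pow_one, pow_zero]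
  simp [Finset.prod_ite_eq]

lemma wick_prod (g : ℕ → ℝ) (h0 : g 0 = 1) (h1 : g 1 = 0) (h2 : g 2 = 1)
    (h3 : g 3 = 0) (h4 : g 4 = 3) (i j k l : Fin p) :
    ∏ m, g (cnt i j k l m)
      = dd i j * dd k l + dd i k * dd j l + dd i l * dd j k := by
  have hz : ∀ w : Fin p, cnt i j k l w = 1 → ∏ m, g (cnt i j k l m) = 0 :=
    fun w hw => Finset.prod_eq_zero (Finset.mem_univ w) (by rw [hw, h1])
  rcases eq_or_ne i j with rfl | hij
  · rcases eq_or_ne i k with rfl | hik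
    · rcases eq_or_ne i l with rfl | hil
      · -- all equal
        have hgm : ∀ m ∈ Finset.univ, g (cnt i i i i m) = if i = m then (3:ℝ) else 1 := by
          intro m _
          rcases eq_or_ne i m with rfl | h <;> simp [cnt, h0, h4, *]
        rw [Finset.prod_congr rfl hgm, Finset.prod_ite_eq]
        simp [dd]
        norm_num
      · -- i=j=k ≠ l
        rw [hz l (by simp [cnt, hil, (Ne.symm hil)])]
        simp [dd, hil, Ne.symm hil]
    · rcases eq_or_ne k l with rfl | hkl
      · -- i=j, k=l, i≠k
        have hgm : ∀ m ∈ Finset.univ, g (cnt i i k k m) = 1 := by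
          intro m _
          rcases eq_or_ne i m with rfl | hA
          · simp [cnt, h2, hik, (Ne.symm hik)]
          · rcases eq_or_ne k m with rfl | hB
            · simp [cnt, h2, hA]
            · simp [cnt, h0, hA, hB]
        rw [Finset.prod_congr rfl hgm, Finset.prod_const_one]
        simp [dd, hik]
      · -- i=j, i≠k, k≠l : cnt at k = 1
        rw [hz k (by simp [cnt, (Ne.symm hik), hik, (Ne.symm hkl), hkl])]
        simp [dd, hik, hkl, Ne.symm hik, Ne.symm hkl]
  · rcases eq_or_ne i k with rfl | hik
    · rcases eq_or_ne j l with rfl | hjl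
      · -- (i j i j), i≠j
        have hgm : ∀ m ∈ Finset.univ, g (cnt i j i j m) = 1 := by
          intro m _
          rcases eq_or_ne i m with rfl | hA
          · simp [cnt, h2, hij, (Ne.symm hij)]
          · rcases eq_or_ne j m with rfl | hB
            · simp [cnt, h2, hA]
            · simp [cnt, h0, hA, hB]
        rw [Finset.prod_congr rfl hgm, Finset.prod_const_one]
        simp [dd, hij]
      · -- (i j i l), j≠l : cnt at j = 1
        rw [hz j (by simp [cnt, (Ne.symm hij), hij, (Ne.symm hjl), hjl])]
        simp [dd, hij, hjl, Ne.symm hij, Ne.symm hjl]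
    · rcases eq_or_ne i l with rfl | hil
      · rcases eq_or_ne j k with rfl | hjk
        · -- (i j j i), i≠j
          have hgm : ∀ m ∈ Finset.univ, g (cnt i j j i m) = 1 := by
            intro m _
            rcases eq_or_ne i m with rfl | hA
            · simp [cnt, h2, hij, (Ne.symm hij)]
            · rcases eq_or_ne j m with rfl | hB
              · simp [cnt, h2, hA]
              · simp [cnt, h0, hA, hB]
          rw [Finset.prod_congr rfl hgm, Finset.prod_const_one]
          simp [dd, hij]
        · -- (i j k i), j≠k, i≠j,i≠k : cnt at j = 1
          rw [hz j (by simp [cnt, (Ne.symm hij), hij, (Ne.symm hjk), hjk])]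
          simp [dd, hij, hjk, hik, Ne.symm hij, Ne.symm hjk, Ne.symm hik]
      · -- i alone : cnt at i = 1
        rw [hz i (by simp [cnt, (Ne.symm hij), hij, (Ne.symm hik), hik, (Ne.symm hil), hil])]
        simp [dd, hij, hik, hil, Ne.symm hij, Ne.symm hik, Ne.symm hil]

lemma final_sum (p : ℕ) (M₁ M₂ : Matrix (Fin p) (Fin p) ℝ) :
    ∑ a : Fin p, ∑ b : Fin p, ∑ k : Fin p, ∑ l : Fin p, ∑ m : Fin p, ∑ n : Fin p,
      (dd m n * dd l a + dd m l * dd n a + dd m a * dd n l)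
      * (dd m n * dd k b + dd m k * dd n b + dd m b * dd n k)
      * (M₁ k l * M₂ a b)
    = 2 * M₁.trace * M₂.trace + ((p : ℝ) + 4) * (M₁ * M₂).trace
      + 2 * (M₁ * M₂ᵀ).trace := by
  simp only [dd, add_mul, mul_add, mul_ite, ite_mul, mul_zero, zero_mul, mul_one, one_mul,
    Finset.sum_add_distrib, Finset.sum_ite_irrel, Finset.sum_const_zero, Finset.sum_ite_eq,
    Finset.sum_ite_eq', Finset.mem_univ, if_true]
  simp only [Matrix.trace, Matrix.diag, Matrix.mul_apply, Matrix.transpose_apply,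
    Finset.mul_sum, Finset.sum_mul, Finset.sum_const, Finset.card_univ, Fintype.card_fin,
    nsmul_eq_mul]
  ring_nf
  have e1 : (∑ x : Fin p, ∑ y : Fin p, (p:ℝ) * M₁ y x * M₂ x y)
      = ∑ x : Fin p, ∑ y : Fin p, (p:ℝ) * M₁ x y * M₂ y x := Finset.sum_comm
  have e2 : (∑ x : Fin p, ∑ y : Fin p, M₁ y x * M₂ x y)
      = ∑ x : Fin p, ∑ y : Fin p, M₁ x y * M₂ y x := Finset.sum_comm
  rw [e1, e2]
  simp only [Finset.sum_mul, Finset.mul_sum]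
  simp only [← Finset.sum_add_distrib]
  exact Finset.sum_congr rfl fun x _ => Finset.sum_congr rfl fun y _ => by ring

lemma quad_moment {p : ℕ} (i j k l : Fin p) :
    ∫ x : Fin p → ℝ, x i * x j * x k * x l ∂(Measure.pi fun _ => gaussianReal 0 1)
      = dd i j * dd k l + dd i k * dd j l + dd i l * dd j k := by
  have h : (fun x : Fin p → ℝ => x i * x j * x k * x l)
      = fun x => ∏ m, (x m) ^ (cnt i j k l m) := funext (monomial_eq i j k l)
  rw [h, pi_moment p (cnt i j k l)]
  exact wick_prod (fun k => ∫ t, t^k ∂(gaussianReal 0 1)) gm0 gm1 gm2 gm3 gm4 i j k l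

lemma quad_integrable {p : ℕ} (i j k l : Fin p) :
    Integrable (fun x : Fin p → ℝ => x i * x j * x k * x l)
      (Measure.pi fun _ => gaussianReal 0 1) := by
  have h := pi_integrable p (cnt i j k l)
  have he : (fun x : Fin p → ℝ => ∏ m, (x m)^(cnt i j k l m))
      = fun x => x i * x j * x k * x l := funext fun x => (monomial_eq i j k l x).symm
  rwa [he] at h



abbrev I6 (p : ℕ) := Fin p × Fin p × Fin p × Fin p × Fin p × Fin p


theorem statement5 (p : ℕ) (M₁ M₂ : Matrix (Fin p) (Fin p) ℝ) :
    ∫ z : (Fin p → ℝ) × (Fin p → ℝ),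
      (z.1 ⬝ᵥ z.2) ^ 2 * ((z.2 ⬝ᵥ M₁.mulVec z.1) * (z.1 ⬝ᵥ M₂.mulVec z.2))
      ∂((Measure.pi fun _ : Fin p => gaussianReal 0 1).prod
        (Measure.pi fun _ : Fin p => gaussianReal 0 1))
    = 2 * M₁.trace * M₂.trace + ((p : ℝ) + 4) * (M₁ * M₂).trace
      + 2 * (M₁ * M₂ᵀ).trace := by
  set μp := (Measure.pi fun _ : Fin p => gaussianReal 0 1) with hμp
  have hF : ∀ z : (Fin p → ℝ) × (Fin p → ℝ),
      (z.1 ⬝ᵥ z.2) ^ 2 * ((z.2 ⬝ᵥ M₁.mulVec z.1) * (z.1 ⬝ᵥ M₂.mulVec z.2))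
      = ∑ c : I6 p,
          (z.1 c.2.2.2.2.1 * z.1 c.2.2.2.2.2 * z.1 c.2.2.2.1 * z.1 c.1)
          * (z.2 c.2.2.2.2.1 * z.2 c.2.2.2.2.2 * z.2 c.2.2.1 * z.2 c.2.1)
          * (M₁ c.2.2.1 c.2.2.2.1 * M₂ c.1 c.2.1) := by
    intro z
    simp only [Fintype.sum_prod_type]
    simp only [dotProduct, Matrix.mulVec, sq, Finset.sum_mul, Finset.mul_sum]
    refine Finset.sum_congr rfl fun i _ => ?_
    refine Finset.sum_congr rfl fun j _ => ?_
    refine Finset.sum_congr rfl fun k _ => ?_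
    refine Finset.sum_congr rfl fun l _ => ?_
    refine Finset.sum_congr rfl fun m _ => ?_
    refine Finset.sum_congr rfl fun n _ => ?_
    ring
  have hInt : ∀ c : I6 p, Integrable (fun z : (Fin p → ℝ) × (Fin p → ℝ) =>
      (z.1 c.2.2.2.2.1 * z.1 c.2.2.2.2.2 * z.1 c.2.2.2.1 * z.1 c.1)
      * (z.2 c.2.2.2.2.1 * z.2 c.2.2.2.2.2 * z.2 c.2.2.1 * z.2 c.2.1)
      * (M₁ c.2.2.1 c.2.2.2.1 * M₂ c.1 c.2.1)) (μp.prod μp) := by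
    intro c
    exact ((quad_integrable c.2.2.2.2.1 c.2.2.2.2.2 c.2.2.2.1 c.1).mul_prod
      (quad_integrable c.2.2.2.2.1 c.2.2.2.2.2 c.2.2.1 c.2.1)).mul_const _
  calc ∫ z : (Fin p → ℝ) × (Fin p → ℝ),
      (z.1 ⬝ᵥ z.2) ^ 2 * ((z.2 ⬝ᵥ M₁.mulVec z.1) * (z.1 ⬝ᵥ M₂.mulVec z.2)) ∂(μp.prod μp)
      = ∑ c : I6 p, ∫ z : (Fin p → ℝ) × (Fin p → ℝ),
          (z.1 c.2.2.2.2.1 * z.1 c.2.2.2.2.2 * z.1 c.2.2.2.1 * z.1 c.1)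
          * (z.2 c.2.2.2.2.1 * z.2 c.2.2.2.2.2 * z.2 c.2.2.1 * z.2 c.2.1)
          * (M₁ c.2.2.1 c.2.2.2.1 * M₂ c.1 c.2.1) ∂(μp.prod μp) := by
        rw [← integral_finset_sum _ (fun c _ => hInt c)]
        exact integral_congr_ae (Filter.Eventually.of_forall hF)
    _ = ∑ c : I6 p,
          (dd c.2.2.2.2.1 c.2.2.2.2.2 * dd c.2.2.2.1 c.1
            + dd c.2.2.2.2.1 c.2.2.2.1 * dd c.2.2.2.2.2 c.1
            + dd c.2.2.2.2.1 c.1 * dd c.2.2.2.2.2 c.2.2.2.1)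
          * (dd c.2.2.2.2.1 c.2.2.2.2.2 * dd c.2.2.1 c.2.1
            + dd c.2.2.2.2.1 c.2.2.1 * dd c.2.2.2.2.2 c.2.1
            + dd c.2.2.2.2.1 c.2.1 * dd c.2.2.2.2.2 c.2.2.1)
          * (M₁ c.2.2.1 c.2.2.2.1 * M₂ c.1 c.2.1) := by
        refine Finset.sum_congr rfl fun c _ => ?_
        rw [MeasureTheory.integral_mul_const]
        rw [MeasureTheory.integral_prod_mul
          (f := fun x : Fin p → ℝ => x c.2.2.2.2.1 * x c.2.2.2.2.2 * x c.2.2.2.1 * x c.1)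
          (g := fun y : Fin p → ℝ => y c.2.2.2.2.1 * y c.2.2.2.2.2 * y c.2.2.1 * y c.2.1)]
        rw [quad_moment, quad_moment]
    _ = 2 * M₁.trace * M₂.trace + ((p : ℝ) + 4) * (M₁ * M₂).trace
        + 2 * (M₁ * M₂ᵀ).trace := by
        simp only [Fintype.sum_prod_type]
        exact final_sum p M₁ M₂
end
end
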